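/- arXiv:2603.23193 — 2 statements merged into one kernel-verified Lean document; each statement's English description precedes it below -/
import Mathlib

section
/- Let T be a ditree with at least two vertices, let L be its set of leaves, and let t be the number of source sets and sink sets of T that contain no leaf. Then the geodetic number of T (the minimum size of a geodetic set of T) equals |L| + t. -/
namespace GeoPaper

variable {V : Type*}

/-- A directed walk from `u` to `v` in the digraph with arc relation `D`,
represented by the list of its vertices. -/
def IsWalk (D : V → V → Prop) (u v : V) (p : List V) : Prop :=
  p.Chain' D ∧ p.head? = some u ∧ p.getLast? = some v

/-- `interval D u v` is the set of vertices lying on some shortest directed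
path from `u` to `v` (i.e. a directed walk of minimum length from `u` to `v`). -/
def interval (D : V → V → Prop) (u v : V) : Set V :=
  {x | ∃ p, IsWalk D u v p ∧ (∀ q, IsWalk D u v q → p.length ≤ q.length) ∧ x ∈ p}

/-- `S` is a geodetic set of the digraph `D`: every vertex lies on a shortest
directed path between two vertices of `S`. -/
def IsGeodetic (D : V → V → Prop) (S : Set V) : Prop :=
  ∀ x, ∃ u ∈ S, ∃ v ∈ S, x ∈ interval D u v

/-- `S` is a geodetic set of minimum cardinality. -/
def IsMinGeodetic (D : V → V → Prop) (S : Set V) : Prop :=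
  IsGeodetic D S ∧ ∀ T : Set V, IsGeodetic D T → S.ncard ≤ T.ncard

/-- a source: no incoming arcs. -/
def IsSource (D : V → V → Prop) (v : V) : Prop := ∀ u, ¬ D u v

/-- a sink: no outgoing arcs. -/
def IsSink (D : V → V → Prop) (v : V) : Prop := ∀ u, ¬ D v u

/-- an extremal vertex: a source or a sink. -/
def Extremal (D : V → V → Prop) (v : V) : Prop := IsSource D v ∨ IsSink D v

/-- the digraph `D` has no directed 2-cycle (an oriented graph). -/
def NoTwoCycle (D : V → V → Prop) : Prop := ∀ u v, D u v → ¬ D v u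

/-- the underlying undirected simple graph of a digraph. -/
def underlying (D : V → V → Prop) : SimpleGraph V where
  Adj u v := u ≠ v ∧ (D u v ∨ D v u)
  symm := by constructor; intro u v h; exact ⟨h.1.symm, h.2.symm⟩
  loopless := by constructor; intro v h; exact h.1 rfl

/-- a leaf: a vertex of degree 1 in the underlying undirected graph. -/
def IsLeaf (D : V → V → Prop) (v : V) : Prop := ((underlying D).neighborSet v).ncard = 1

/-- a ditree: a digraph whose underlying undirected graph is a tree. -/
def IsDitree (D : V → V → Prop) : Prop := (∀ v, ¬ D v v) ∧ (underlying D).IsTree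

/-- reachability by directed paths. -/
def Reach (D : V → V → Prop) : V → V → Prop := Relation.ReflTransGen D

/-- `S` is a maximal strongly connected component of `D`. -/
def IsSCC (D : V → V → Prop) (S : Set V) : Prop :=
  S.Nonempty ∧ (∀ u ∈ S, ∀ v ∈ S, Reach D u v) ∧
    ∀ T : Set V, S ⊆ T → (∀ u ∈ T, ∀ v ∈ T, Reach D u v) → T ⊆ S

/-- a source set: a maximal strongly connected component no arc enters from outside. -/
def IsSourceSet (D : V → V → Prop) (S : Set V) : Prop :=
  IsSCC D S ∧ ∀ u v, v ∈ S → D u v → u ∈ S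

/-- a sink set: a maximal strongly connected component no arc leaves. -/
def IsSinkSet (D : V → V → Prop) (S : Set V) : Prop :=
  IsSCC D S ∧ ∀ u v, u ∈ S → D u v → v ∈ S

/-- a transitive vertex. -/
def IsTransitiveVertex (D : V → V → Prop) (v : V) : Prop :=
  ∀ u1 u2, D u1 v → D v u2 → D u1 u2 ∨ u1 = u2

/-! In a ditree a shortest directed `u`–`v` walk, if there is one, is the tree path from `u` to
`v`; so `x ∈ I(u, v)` iff `u` reaches `x`, `x` reaches `v` and `x` lies on the tree path.
A leaf is never an inner vertex of a tree path, and a shortest path through a source (sink) set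
starts (ends) in it; this gives the lower bound. For the upper bound take the leaves together with
one vertex of each leafless source or sink set. Since this set meets every source and sink set,
every vertex `x` is reached from it and reaches it, and it suffices to find the two vertices in
different branches of `T - x`. Each branch contains a vertex of the set reaching `x` or reached
from `x`: otherwise the part of the strong component of `x` inside the branch would be closed,
and its vertex farthest from `x` would be a leaf. -/

open SimpleGraph

lemma exists_adj_ne_of_ncard_ne_one {G : SimpleGraph V} {x a : V} (ha : G.Adj x a)
    (hx : (G.neighborSet x).ncard ≠ 1) : ∃ m, G.Adj x m ∧ m ≠ a := by
  by_contra! h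
  exact hx (Set.ncard_eq_one.2 ⟨a, Set.eq_singleton_iff_unique_mem.2 ⟨ha, h⟩⟩)

section Tree

variable {G : SimpleGraph V} (hG : G.IsTree)

noncomputable def treePath (u v : V) : G.Walk u v := (hG.existsUnique_path u v).choose

lemma isPath_treePath (u v : V) : (treePath hG u v).IsPath :=
  (hG.existsUnique_path u v).choose_spec.1

lemma eq_treePath {u v : V} {p : G.Walk u v} (hp : p.IsPath) : p = treePath hG u v :=
  (hG.existsUnique_path u v).choose_spec.2 p hp

lemma treePath_self (u : V) : treePath hG u u = .nil :=
  (eq_treePath hG .nil).symm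

lemma treePath_of_adj {u v : V} (h : G.Adj u v) : treePath hG u v = .cons h .nil :=
  (eq_treePath hG (by simp [h.ne])).symm

lemma mem_support_treePath_comm {u v x : V} :
    x ∈ (treePath hG u v).support ↔ x ∈ (treePath hG v u).support := by
  rw [← eq_treePath hG (isPath_treePath hG u v).reverse, Walk.support_reverse, List.mem_reverse]

lemma mem_support_treePath_or {u v w x : V} (hx : x ∈ (treePath hG u w).support) :
    x ∈ (treePath hG u v).support ∨ x ∈ (treePath hG v w).support := by
  classical
  let p := (treePath hG u v).append (treePath hG v w)
  rw [← eq_treePath hG p.bypass_isPath] at hx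
  have := p.support_bypass_subset_support hx
  rw [Walk.support_append, List.mem_append] at this
  exact this.imp_right List.mem_of_mem_tail

lemma length_treePath_le {u v : V} (p : G.Walk u v) : (treePath hG u v).length ≤ p.length := by
  classical
  rw [← eq_treePath hG p.bypass_isPath]
  exact p.length_bypass_le_length

lemma eq_treePath_of_length_le {u v : V} (p : G.Walk u v)
    (h : p.length ≤ (treePath hG u v).length) : p = treePath hG u v := by
  classical
  rw [← eq_treePath hG p.bypass_isPath] at h ⊢
  exact (p.bypass_eq_self_of_length_le_length_bypass h).symm

lemma treePath_takeUntil [DecidableEq V] {u v x : V} (hx : x ∈ (treePath hG u v).support) :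
    treePath hG u x = (treePath hG u v).takeUntil x hx :=
  (eq_treePath hG ((isPath_treePath hG u v).takeUntil hx)).symm

lemma treePath_dropUntil [DecidableEq V] {u v x : V} (hx : x ∈ (treePath hG u v).support) :
    treePath hG x v = (treePath hG u v).dropUntil x hx :=
  (eq_treePath hG ((isPath_treePath hG u v).dropUntil hx)).symm

lemma treePath_concat {u v y : V} (h : G.Adj v y) (hy : y ∉ (treePath hG u v).support) :
    treePath hG u y = (treePath hG u v).concat h :=
  (eq_treePath hG ((isPath_treePath hG u v).concat hy h)).symm

lemma eq_penultimate_of_mem_treePath {u v y : V} (hy : y ∈ (treePath hG u v).support)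
    (h : G.Adj y v) : y = (treePath hG u v).penultimate := by
  classical
  have hdrop : (treePath hG u v).dropUntil y hy = Walk.cons h .nil := by
    rw [← treePath_dropUntil, treePath_of_adj]
  conv_rhs => rw [← (treePath hG u v).take_spec hy, hdrop, ← Walk.concat_eq_append]
  exact (Walk.penultimate_concat _ h).symm

/-- For a neighbour `m` of `x`, the vertex set of the component of `G - x` containing `m`. -/
def branch (x m : V) : Set V := {z | x ∉ (treePath hG m z).support}

lemma mem_branch_self {x m : V} (h : m ≠ x) : m ∈ branch hG x m := by
  simpa [branch, treePath_self] using h.symm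

lemma notMem_branch (x m : V) : x ∉ branch hG x m :=
  fun h => h (treePath hG m x).end_mem_support

lemma mem_branch_of_notMem_support {x m z y : V} (hz : z ∈ branch hG x m)
    (h : x ∉ (treePath hG z y).support) : y ∈ branch hG x m :=
  fun hy => (mem_support_treePath_or hG hy).elim hz h

lemma mem_branch_of_adj {x m z y : V} (hz : z ∈ branch hG x m) (h : G.Adj z y) (hy : y ≠ x) :
    y ∈ branch hG x m := by
  refine mem_branch_of_notMem_support hG hz ?_
  rw [treePath_of_adj hG h]
  have hzx : z ≠ x := ne_of_mem_of_not_mem hz (notMem_branch hG x m)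
  simp [hzx.symm, hy.symm]

lemma exists_mem_branch {x u : V} (h : u ≠ x) : ∃ a, G.Adj x a ∧ u ∈ branch hG x a := by
  have hnil : ¬ (treePath hG x u).Nil := Walk.not_nil_of_ne h.symm
  have hpath := isPath_treePath hG x u
  rw [← (treePath hG x u).cons_tail_eq hnil, Walk.cons_isPath_iff] at hpath
  exact ⟨_, Walk.adj_snd hnil, show x ∉ _ from eq_treePath hG hpath.1 ▸ hpath.2⟩

lemma notMem_support_treePath_of_mem_branch {x m u v : V} (hu : u ∈ branch hG x m)
    (hv : v ∈ branch hG x m) : x ∉ (treePath hG u v).support := fun hx =>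
  (mem_support_treePath_or hG (v := m) hx).elim
    (fun h => hu ((mem_support_treePath_comm hG).1 h)) hv

lemma mem_support_treePath_of_mem_branch {x a b u v : V} (hab : a ≠ b) (ha : G.Adj x a)
    (hb : G.Adj x b) (hu : u ∈ branch hG x a) (hv : v ∈ branch hG x b) :
    x ∈ (treePath hG u v).support := by
  by_contra hx
  have hab' : x ∈ (treePath hG a b).support := by
    rw [← eq_treePath hG (p := .cons ha.symm (.cons hb .nil)) (by simp [ha.ne', hb.ne, hab])]
    simp
  rcases mem_support_treePath_or hG (v := u) hab' with h | h
  · exact hu h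
  rcases mem_support_treePath_or hG (v := v) h with h | h
  · exact hx h
  · exact hv ((mem_support_treePath_comm hG).1 h)

lemma eq_or_eq_of_mem_support_treePath {x u v : V} (hx : (G.neighborSet x).ncard = 1)
    (h : x ∈ (treePath hG u v).support) : x = u ∨ x = v := by
  by_contra! hne
  obtain ⟨a, hxa, hu⟩ := exists_mem_branch hG hne.1.symm
  obtain ⟨b, hxb, hv⟩ := exists_mem_branch hG hne.2.symm
  obtain ⟨w, hw⟩ := Set.ncard_eq_one.1 hx
  obtain rfl : a = w := (Set.ext_iff.1 hw a).1 hxa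
  obtain rfl : b = a := (Set.ext_iff.1 hw b).1 hxb
  exact notMem_support_treePath_of_mem_branch hG hu hv h

end Tree

lemma exists_adj_notMem_of_forall_ncard_ne_one [Finite V] {G : SimpleGraph V} (hG : G.IsTree)
    (x : V) {S : Set V} (hS : S.Nonempty) (hxS : x ∉ S)
    (hdeg : ∀ z ∈ S, (G.neighborSet z).ncard ≠ 1) : ∃ z ∈ S, ∃ y ∉ S, y ≠ x ∧ G.Adj z y := by
  obtain ⟨z, hz, hmax⟩ := S.exists_max_image (fun z => (treePath hG x z).length) S.toFinite hS
  have hnil : ¬ (treePath hG x z).Nil := Walk.not_nil_of_ne (ne_of_mem_of_not_mem hz hxS).symm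
  obtain ⟨y, hzy, hy⟩ := exists_adj_ne_of_ncard_ne_one (Walk.adj_penultimate hnil).symm (hdeg z hz)
  have hyp : y ∉ (treePath hG x z).support := fun h =>
    hy (eq_penultimate_of_mem_treePath hG h hzy.symm)
  refine ⟨z, hz, y, fun hyS => ?_, fun hyx => hyp (hyx ▸ Walk.start_mem_support _), hzy⟩
  have := hmax y hyS
  rw [treePath_concat hG hzy hyp, Walk.length_concat] at this
  omega

section Digraph

variable {D : V → V → Prop}

lemma reach_flip {u v : V} : Reach (flip D) u v ↔ Reach D v u :=
  Relation.reflTransGen_swap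

lemma isSCC_flip_iff {S : Set V} : IsSCC (flip D) S ↔ IsSCC D S := by
  have hswap : ∀ U : Set V,
      (∀ u ∈ U, ∀ v ∈ U, Reach (flip D) u v) ↔ ∀ u ∈ U, ∀ v ∈ U, Reach D u v := fun U => by
    simp only [reach_flip]
    exact ⟨fun h u hu v hv => h v hv u hu, fun h u hu v hv => h v hv u hu⟩
  simp only [IsSCC, hswap]

lemma isSourceSet_flip_iff {S : Set V} : IsSourceSet (flip D) S ↔ IsSinkSet D S := by
  simp only [IsSourceSet, IsSinkSet, isSCC_flip_iff, flip]
  exact and_congr_right fun _ => forall_comm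

lemma IsSCC.eq_of_mem {S₁ S₂ : Set V} {x : V} (h₁ : IsSCC D S₁) (h₂ : IsSCC D S₂)
    (hx₁ : x ∈ S₁) (hx₂ : x ∈ S₂) : S₁ = S₂ := by
  have hreach : ∀ u ∈ S₁ ∪ S₂, ∀ v ∈ S₁ ∪ S₂, Reach D u v := by
    have hx : ∀ u ∈ S₁ ∪ S₂, Reach D u x ∧ Reach D x u := by
      rintro u (hu | hu)
      exacts [⟨h₁.2.1 u hu x hx₁, h₁.2.1 x hx₁ u hu⟩, ⟨h₂.2.1 u hu x hx₂, h₂.2.1 x hx₂ u hu⟩]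
    exact fun u hu v hv => (hx u hu).1.trans (hx v hv).2
  exact ((h₁.2.2 _ Set.subset_union_left hreach).antisymm Set.subset_union_left).symm.trans
    ((h₂.2.2 _ Set.subset_union_right hreach).antisymm Set.subset_union_right)

lemma IsSourceSet.mem_of_reach {S : Set V} {u x : V} (hS : IsSourceSet D S) (h : Reach D u x)
    (hx : x ∈ S) : u ∈ S := by
  induction h using Relation.ReflTransGen.head_induction_on with
  | refl => exact hx
  | head huw _ ih => exact hS.2 _ _ ih huw

lemma IsSinkSet.mem_of_reach {S : Set V} {x v : V} (hS : IsSinkSet D S) (h : Reach D x v)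
    (hx : x ∈ S) : v ∈ S :=
  (isSourceSet_flip_iff.2 hS).mem_of_reach (reach_flip.2 h) hx

lemma isSCC_setOf_reach (x : V) : IsSCC D {y | Reach D x y ∧ Reach D y x} :=
  ⟨⟨x, .refl, .refl⟩, fun _ hu _ hv => hu.2.trans hv.1,
    fun _ hsub hS y hy => ⟨hS x (hsub ⟨.refl, .refl⟩) y hy, hS y hy x (hsub ⟨.refl, .refl⟩)⟩⟩

lemma exists_reach_of_forall_isSourceSet [Finite V] {A : Set V}
    (hsrc : ∀ S, IsSourceSet D S → ∃ g ∈ A, g ∈ S) (x : V) : ∃ g ∈ A, Reach D g x := by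
  -- a vertex reaching `x` with the fewest ancestors lies in a source set
  obtain ⟨z, hzx, hmin⟩ := Set.exists_min_image {z | Reach D z x}
    (fun z => {w | Reach D w z}.ncard) (Set.toFinite _) ⟨x, .refl⟩
  have hsource : IsSourceSet D {y | Reach D z y ∧ Reach D y z} := by
    refine ⟨isSCC_setOf_reach z, fun w c hc hwc => ?_⟩
    have hwz : Reach D w z := .head hwc hc.2
    have hanc : {y | Reach D y w} = {y | Reach D y z} :=
      Set.eq_of_subset_of_ncard_le (fun y hy => hy.trans hwz) (hmin w (hwz.trans hzx))
    exact ⟨(Set.ext_iff.1 hanc z).2 .refl, hwz⟩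
  obtain ⟨g, hg, hgz⟩ := hsrc _ hsource
  exact ⟨g, hg, hgz.2.trans hzx⟩

lemma exists_reach_of_forall_isSinkSet [Finite V] {A : Set V}
    (hsnk : ∀ S, IsSinkSet D S → ∃ g ∈ A, g ∈ S) (x : V) : ∃ g ∈ A, Reach D x g := by
  simpa only [reach_flip] using
    exists_reach_of_forall_isSourceSet (fun S hS => hsnk S (isSourceSet_flip_iff.1 hS)) x

end Digraph

section Orientation

variable {G : SimpleGraph V} {T : V → V → Prop}

lemma reach_of_forall_darts {u v : V} (p : G.Walk u v) (hp : ∀ d ∈ p.darts, T d.fst d.snd) :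
    Reach T u v := by
  induction p with
  | nil => exact .refl
  | cons h p ih =>
    simp only [Walk.darts_cons, List.mem_cons, forall_eq_or_imp] at hp
    exact .head hp.1 (ih hp.2)

lemma isChain_support {u v : V} (p : G.Walk u v) (hp : ∀ d ∈ p.darts, T d.fst d.snd) :
    p.support.IsChain T := by
  induction p with
  | nil => exact List.isChain_singleton _
  | cons h p ih =>
    simp only [Walk.darts_cons, List.mem_cons, forall_eq_or_imp] at hp
    cases p with
    | nil => simpa using hp.1
    | cons h' q => simpa [List.isChain_cons_cons, hp.1] using ih hp.2

lemma exists_walk_of_reach (hGT : ∀ ⦃u v⦄, T u v → G.Adj u v) {u v : V} (h : Reach T u v) :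
    ∃ p : G.Walk u v, ∀ d ∈ p.darts, T d.fst d.snd := by
  induction h using Relation.ReflTransGen.head_induction_on with
  | refl => exact ⟨.nil, by simp⟩
  | head huw _ ih =>
    obtain ⟨p, hp⟩ := ih
    exact ⟨.cons (hGT huw) p, by simpa [huw] using hp⟩

lemma exists_walk_of_isWalk (hGT : ∀ ⦃u v⦄, T u v → G.Adj u v) :
    ∀ {u v : V} {l : List V}, IsWalk T u v l →
      ∃ p : G.Walk u v, p.support = l ∧ ∀ d ∈ p.darts, T d.fst d.snd
  | _, _, [], ⟨_, hu, _⟩ => by simp at hu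
  | _, _, [a], ⟨_, hu, hv⟩ => by
    obtain rfl : a = _ := by simpa using hu
    obtain rfl : a = _ := by simpa using hv
    exact ⟨.nil, rfl, by simp⟩
  | _, _, a :: b :: l, ⟨hl, hu, hv⟩ => by
    obtain rfl : a = _ := by simpa using hu
    have hl : T a b ∧ (b :: l).IsChain T := List.isChain_cons_cons.1 hl
    obtain ⟨p, hp, hd⟩ := exists_walk_of_isWalk hGT ⟨hl.2, rfl, by simpa using hv⟩
    exact ⟨.cons (hGT hl.1) p, by simp [hp], by simpa [hl.1] using hd⟩

variable (hG : G.IsTree)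

lemma forall_darts_treePath_of_reach (hGT : ∀ ⦃u v⦄, T u v → G.Adj u v) {u v : V}
    (h : Reach T u v) : ∀ d ∈ (treePath hG u v).darts, T d.fst d.snd := by
  classical
  obtain ⟨p, hp⟩ := exists_walk_of_reach hGT h
  rw [← eq_treePath hG p.bypass_isPath]
  exact fun d hd => hp d (p.darts_bypass_subset_darts hd)

lemma reach_of_mem_support_treePath (hGT : ∀ ⦃u v⦄, T u v → G.Adj u v) {u v x : V}
    (h : Reach T u v) (hx : x ∈ (treePath hG u v).support) : Reach T u x ∧ Reach T x v := by
  classical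
  have hd := forall_darts_treePath_of_reach hG hGT h
  constructor
  · refine reach_of_forall_darts (treePath hG u x) fun d hd' => hd d ?_
    rw [treePath_takeUntil hG hx] at hd'
    exact Walk.darts_takeUntil_subset_darts _ hx hd'
  · refine reach_of_forall_darts (treePath hG x v) fun d hd' => hd d ?_
    rw [treePath_dropUntil hG hx] at hd'
    exact Walk.darts_dropUntil_subset_darts _ hx hd'

lemma mem_interval_iff (hGT : ∀ ⦃u v⦄, T u v → G.Adj u v) {u v x : V} :
    x ∈ interval T u v ↔ Reach T u v ∧ x ∈ (treePath hG u v).support := by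
  have hwalk : Reach T u v → IsWalk T u v (treePath hG u v).support := fun h =>
    ⟨isChain_support _ (forall_darts_treePath_of_reach hG hGT h), by simp [List.head?_eq_some_head],
      by simp [List.getLast?_eq_some_getLast]⟩
  constructor
  · rintro ⟨l, hl, hmin, hx⟩
    obtain ⟨p, rfl, hp⟩ := exists_walk_of_isWalk hGT hl
    have hreach := reach_of_forall_darts p hp
    have hlen := hmin _ (hwalk hreach)
    rw [Walk.length_support, Walk.length_support] at hlen
    exact ⟨hreach, eq_treePath_of_length_le hG p (by omega) ▸ hx⟩
  · rintro ⟨h, hx⟩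
    refine ⟨_, hwalk h, fun l hl => ?_, hx⟩
    obtain ⟨p, rfl, -⟩ := exists_walk_of_isWalk hGT hl
    simpa [Walk.length_support] using length_treePath_le hG p

lemma mem_interval_of_mem_branch (hGT : ∀ ⦃u v⦄, T u v → G.Adj u v) {x a b u v : V}
    (hab : a ≠ b) (ha : G.Adj x a) (hb : G.Adj x b) (hu : u ∈ branch hG x a)
    (hv : v ∈ branch hG x b) (hux : Reach T u x) (hxv : Reach T x v) : x ∈ interval T u v :=
  (mem_interval_iff hG hGT).2 ⟨hux.trans hxv, mem_support_treePath_of_mem_branch hG hab ha hb hu hv⟩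

lemma exists_mem_branch_reach_to [Finite V] (hGT : ∀ ⦃u v⦄, T u v → G.Adj u v) {A : Set V}
    (hsrc : ∀ S, IsSourceSet T S → ∃ g ∈ A, g ∈ S) {x m w : V} (hw : w ∈ branch hG x m)
    (hwx : Reach T w x) (hxw : ¬ Reach T x w) : ∃ g ∈ A, g ∈ branch hG x m ∧ Reach T g x := by
  obtain ⟨g, hg, hgw⟩ := exists_reach_of_forall_isSourceSet hsrc w
  refine ⟨g, hg, mem_branch_of_notMem_support hG hw fun hx => hxw ?_, hgw.trans hwx⟩
  exact (reach_of_mem_support_treePath hG hGT hgw ((mem_support_treePath_comm hG).1 hx)).2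

lemma exists_mem_branch_reach_from [Finite V] (hGT : ∀ ⦃u v⦄, T u v → G.Adj u v) {A : Set V}
    (hsnk : ∀ S, IsSinkSet T S → ∃ g ∈ A, g ∈ S) {x m w : V} (hw : w ∈ branch hG x m)
    (hxw : Reach T x w) (hwx : ¬ Reach T w x) : ∃ g ∈ A, g ∈ branch hG x m ∧ Reach T x g := by
  simpa only [reach_flip] using exists_mem_branch_reach_to hG (T := flip T)
    (fun _ _ h => (hGT h).symm) (fun S hS => hsnk S (isSourceSet_flip_iff.1 hS)) hw
    (reach_flip.2 hxw) (by rwa [reach_flip])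

end Orientation

section Ditree

variable {T : V → V → Prop}

lemma IsDitree.adj (hT : IsDitree T) : ∀ ⦃u v⦄, T u v → (underlying T).Adj u v :=
  fun u _ h => ⟨fun he => hT.1 u (he ▸ h), .inl h⟩

lemma exists_mem_branch_reach [Finite V] (hT : IsDitree T) {A : Set V}
    (hL : ∀ v, IsLeaf T v → v ∈ A) (hsrc : ∀ S, IsSourceSet T S → ∃ g ∈ A, g ∈ S)
    (hsnk : ∀ S, IsSinkSet T S → ∃ g ∈ A, g ∈ S) {x m : V} (hxm : (underlying T).Adj x m) :
    ∃ g ∈ A, g ∈ branch hT.2 x m ∧ (Reach T g x ∨ Reach T x g) := by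
  by_contra! h
  -- `C` is the strong component of `x`; by `h` no arc joins it to the rest of the branch.
  set C := {z | Reach T x z ∧ Reach T z x}
  have hC : ∀ c ∈ C, ∀ w ∈ branch hT.2 x m, (underlying T).Adj c w → w ∈ C := by
    intro c hc w hw hcw
    by_contra hwC
    rcases hcw.2 with hcw | hwc
    · have hxw : Reach T x w := hc.1.tail hcw
      obtain ⟨g, hg, hgB, hxg⟩ := exists_mem_branch_reach_from hT.2 hT.adj hsnk hw
        hxw fun hwx => hwC ⟨hxw, hwx⟩
      exact (h g hg hgB).2 hxg
    · have hwx : Reach T w x := .head hwc hc.2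
      obtain ⟨g, hg, hgB, hgx⟩ := exists_mem_branch_reach_to hT.2 hT.adj hsrc hw
        hwx fun hxw => hwC ⟨hxw, hwx⟩
      exact (h g hg hgB).1 hgx
  have hmB := mem_branch_self hT.2 hxm.ne'
  obtain ⟨z, hz, y, hy, hyx, hzy⟩ :=
    exists_adj_notMem_of_forall_ncard_ne_one hT.2 x (S := C ∩ branch hT.2 x m)
      ⟨m, hC x ⟨.refl, .refl⟩ m hmB hxm, hmB⟩ (fun hx => notMem_branch hT.2 x m hx.2)
      (fun z hz hleaf => (h z (hL z hleaf) hz.2).1 hz.1.2)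
  have hyB := mem_branch_of_adj hT.2 hz.2 hzy hyx
  exact hy ⟨hC z hz.1 y hyB hzy, hyB⟩

lemma isGeodetic_of_forall_isLeaf_isSourceSet_isSinkSet [Finite V] (hT : IsDitree T) {A : Set V}
    (hL : ∀ v, IsLeaf T v → v ∈ A) (hsrc : ∀ S, IsSourceSet T S → ∃ g ∈ A, g ∈ S)
    (hsnk : ∀ S, IsSinkSet T S → ∃ g ∈ A, g ∈ S) : IsGeodetic T A := by
  intro x
  by_cases hx : x ∈ A
  · exact ⟨x, hx, x, hx, (mem_interval_iff hT.2 hT.adj).2 ⟨.refl, Walk.start_mem_support _⟩⟩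
  obtain ⟨u, hu, hux⟩ := exists_reach_of_forall_isSourceSet hsrc x
  obtain ⟨v, hv, hxv⟩ := exists_reach_of_forall_isSinkSet hsnk x
  obtain ⟨a, hxa, hua⟩ := exists_mem_branch hT.2 (ne_of_mem_of_not_mem hu hx)
  obtain ⟨b, hxb, hvb⟩ := exists_mem_branch hT.2 (ne_of_mem_of_not_mem hv hx)
  by_cases hab : a = b
  · subst hab
    obtain ⟨m, hxm, hma⟩ := exists_adj_ne_of_ncard_ne_one hxa fun hleaf => hx (hL x hleaf)
    obtain ⟨g, hg, hgB, hgx | hxg⟩ := exists_mem_branch_reach hT hL hsrc hsnk hxm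
    · exact ⟨g, hg, v, hv, mem_interval_of_mem_branch hT.2 hT.adj hma hxm hxa hgB hvb hgx hxv⟩
    · exact ⟨u, hu, g, hg,
        mem_interval_of_mem_branch hT.2 hT.adj (Ne.symm hma) hxa hxm hua hgB hux hxg⟩
  · exact ⟨u, hu, v, hv, mem_interval_of_mem_branch hT.2 hT.adj hab hxa hxb hua hvb hux hxv⟩

lemma mem_of_isGeodetic_of_isLeaf (hT : IsDitree T) {S : Set V} (hS : IsGeodetic T S) {x : V}
    (hx : IsLeaf T x) : x ∈ S := by
  obtain ⟨u, hu, v, hv, hxuv⟩ := hS x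
  rcases eq_or_eq_of_mem_support_treePath hT.2 hx
    ((mem_interval_iff hT.2 hT.adj).1 hxuv).2 with rfl | rfl
  exacts [hu, hv]

lemma exists_mem_of_isGeodetic (hT : IsDitree T) {S C : Set V} (hS : IsGeodetic T S)
    (hC : IsSourceSet T C ∨ IsSinkSet T C) : ∃ g ∈ S, g ∈ C := by
  obtain ⟨x, hxC⟩ := hC.elim (·.1.1) (·.1.1)
  obtain ⟨u, hu, v, hv, hxuv⟩ := hS x
  obtain ⟨huv, hx⟩ := (mem_interval_iff hT.2 hT.adj).1 hxuv
  have hreach := reach_of_mem_support_treePath hT.2 hT.adj huv hx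
  rcases hC with hC | hC
  exacts [⟨u, hu, hC.mem_of_reach hreach.1 hxC⟩, ⟨v, hv, hC.mem_of_reach hreach.2 hxC⟩]

def leaflessExtremalSets (D : V → V → Prop) : Set (Set V) :=
  {S | (IsSourceSet D S ∨ IsSinkSet D S) ∧ ∀ v ∈ S, ¬ IsLeaf D v}

lemma ncard_le_of_isGeodetic [Finite V] (hT : IsDitree T) {S : Set V} (hS : IsGeodetic T S) :
    {v | IsLeaf T v}.ncard + (leaflessExtremalSets T).ncard ≤ S.ncard := by
  have : Nonempty V := hT.2.connected.nonempty
  choose! pick hpickS hpickC using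
    fun C (hC : C ∈ leaflessExtremalSets T) => exists_mem_of_isGeodetic hT hS hC.1
  have hinj : Set.InjOn pick (leaflessExtremalSets T) := fun C₁ h₁ C₂ h₂ he =>
    (h₁.1.elim (·.1) (·.1)).eq_of_mem (h₂.1.elim (·.1) (·.1)) (hpickC C₁ h₁) (he ▸ hpickC C₂ h₂)
  have hdisj : Disjoint {v | IsLeaf T v} (pick '' leaflessExtremalSets T) := by
    rw [Set.disjoint_right]
    rintro _ ⟨C, hC, rfl⟩
    exact hC.2 _ (hpickC C hC)
  rw [← hinj.ncard_image, ← Set.ncard_union_eq hdisj]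
  exact Set.ncard_le_ncard (Set.union_subset (fun x hx => mem_of_isGeodetic_of_isLeaf hT hS hx)
    (Set.image_subset_iff.2 hpickS))

lemma exists_isGeodetic_ncard_le [Finite V] (hT : IsDitree T) : ∃ S, IsGeodetic T S ∧
    S.ncard ≤ {v | IsLeaf T v}.ncard + (leaflessExtremalSets T).ncard := by
  have : Nonempty V := hT.2.connected.nonempty
  choose! rep hrep using fun C (hC : C ∈ leaflessExtremalSets T) => hC.1.elim (·.1.1) (·.1.1)
  set A := {v | IsLeaf T v} ∪ rep '' leaflessExtremalSets T
  have hmeet : ∀ C, IsSourceSet T C ∨ IsSinkSet T C → ∃ g ∈ A, g ∈ C := by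
    intro C hC
    by_cases hleaf : ∀ v ∈ C, ¬ IsLeaf T v
    · exact ⟨rep C, .inr ⟨C, ⟨hC, hleaf⟩, rfl⟩, hrep C ⟨hC, hleaf⟩⟩
    · obtain ⟨v, hv, hleaf⟩ : ∃ v ∈ C, IsLeaf T v := by simpa using hleaf
      exact ⟨v, .inl hleaf, hv⟩
  refine ⟨A, isGeodetic_of_forall_isLeaf_isSourceSet_isSinkSet hT (fun _ => .inl)
    (fun C hC => hmeet C (.inl hC)) (fun C hC => hmeet C (.inr hC)), ?_⟩
  exact (Set.ncard_union_le _ _).trans (Nat.add_le_add_left (Set.ncard_image_le (Set.toFinite _)) _)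

end Ditree

theorem geodetic_number_of_ditree_general [Fintype V] (T : V → V → Prop)
    (hT : IsDitree T) :
    sInf {k | ∃ S : Set V, IsGeodetic T S ∧ S.ncard = k} =
      {v | IsLeaf T v}.ncard +
      {S : Set V | (IsSourceSet T S ∨ IsSinkSet T S) ∧
        ∀ v ∈ S, ¬ IsLeaf T v}.ncard := by
  obtain ⟨S, hS, hcard⟩ := exists_isGeodetic_ncard_le hT
  have hmem : S.ncard ∈ {k | ∃ S : Set V, IsGeodetic T S ∧ S.ncard = k} := ⟨S, hS, rfl⟩
  refine le_antisymm ((Nat.sInf_le hmem).trans hcard) (le_csInf ⟨_, hmem⟩ ?_)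
  rintro _ ⟨S', hS', rfl⟩
  exact ncard_le_of_isGeodetic hT hS'

/-- Let `T` be a ditree with at least two vertices, `L` its
set of leaves and `t` the number of source sets and sink sets of `T`
containing no leaf. Then the geodetic number of `T` equals `|L| + t`. -/
theorem geodetic_number_of_ditree [Fintype V] (T : V → V → Prop)
    (hT : IsDitree T) (hcard : 2 ≤ Fintype.card V) :
    sInf {k | ∃ S : Set V, IsGeodetic T S ∧ S.ncard = k} =
      {v | IsLeaf T v}.ncard +
      {S : Set V | (IsSourceSet T S ∨ IsSinkSet T S) ∧
        ∀ v ∈ S, ¬ IsLeaf T v}.ncard :=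
  geodetic_number_of_ditree_general T hT

end GeoPaper
end

section
/- Let D be a digraph without 2-cycles, let S^0 be the set of extremal vertices of D, and let D_b be the base digraph of D. If S is a geodetic set of D, then the set S' = (S ∩ V(D_b)) ∪ S^0 is also a geodetic set of D. -/
namespace GeoPaper

variable {V : Type*}

variable {V : Type*}

/-- degree of `v` inside the vertex subset `W` of the graph `G`. -/
noncomputable def degIn (G : SimpleGraph V) (W : Set V) (v : V) : ℕ := {u | u ∈ W ∧ G.Adj v u}.ncard

/-- one round of pruning: delete all vertices of degree exactly 1. -/
def pruneStep (G : SimpleGraph V) (W : Set V) : Set V := {v | v ∈ W ∧ degIn G W v ≠ 1}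

/-- the vertex set of the base graph of `G`, obtained by iteratively deleting
degree-1 vertices until none remain. -/
def baseSet (G : SimpleGraph V) : Set V := ⋂ k, (pruneStep G)^[k] Set.univ

/-- a core vertex: a vertex of degree at least 3 in the base graph. -/
def IsCoreVertex (G : SimpleGraph V) (v : V) : Prop :=
  v ∈ baseSet G ∧ 3 ≤ degIn G (baseSet G) v

/-- the inner vertices of a path represented as a list of its vertices. -/
def innerList (p : List V) : List V := (p.drop 1).dropLast

/-- a core path of the base graph of `G`: a path between two core vertices all
of whose internal vertices have degree 2 in the base graph (the two endpoints
may coincide, in which case the core path is a core cycle). -/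
def IsCorePath (G : SimpleGraph V) (p : List V) : Prop :=
  ∃ a q b, p = a :: (q ++ [b]) ∧
    p.Chain' G.Adj ∧
    (∀ v ∈ p, v ∈ baseSet G) ∧
    IsCoreVertex G a ∧ IsCoreVertex G b ∧
    q.Nodup ∧ (∀ v ∈ q, v ≠ a ∧ v ≠ b ∧ degIn G (baseSet G) v = 2) ∧
    (a = b → 4 ≤ p.length) ∧ (a ≠ b → p.Nodup)

/-- the feedback edge set number: the minimum number of edges whose deletion
yields a forest. -/
noncomputable def fen (G : SimpleGraph V) : ℕ :=
  sInf {k | ∃ F : Set (Sym2 V), F ⊆ G.edgeSet ∧ F.ncard = k ∧ (G.deleteEdges F).IsAcyclic}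

/-- the feedback vertex set number: the minimum number of vertices whose
deletion yields a forest. -/
noncomputable def fvn (G : SimpleGraph V) : ℕ :=
  sInf {k | ∃ W : Set V, W.ncard = k ∧ (G.induce Wᶜ).IsAcyclic}



/-!
Vertices outside the base graph lie on no cycle of the underlying graph, so every arc at such a
vertex is a bridge. Let `x` lie on a geodesic from `s ∈ S` to `v`, where `s` is neither a base
vertex nor a source, and let `t → s` be an arc. Some geodesic between vertices of `S` passes
through `t`; its start `u₀ ∈ S` lies on the far side of the bridge, while `v` lies on the side of
`s` (leaving it would need the arc `s → t`). Every walk from `u₀` to `v` therefore passes through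
`s`, so `x` lies on a strictly longer geodesic from `u₀` to `v`. Choosing `s ∈ S` with the longest
such geodesic thus gives a source or a vertex of `S` in the base; the end `v` is handled by
reversing all arcs.
-/

section Walks

variable {D : V → V → Prop} {a b c u v : V} {p q : List V}

theorem isWalk_pair (h : D a b) : IsWalk D a b [a, b] :=
  ⟨List.isChain_cons_cons.mpr ⟨h, List.isChain_singleton b⟩, rfl, rfl⟩

theorem IsWalk.exists_eq_cons (h : IsWalk D u v p) : ∃ t, p = u :: t := by
  obtain ⟨-, hh, -⟩ := h
  cases p with
  | nil => simp at hh
  | cons a t => exact ⟨t, by simpa using hh⟩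

theorem IsWalk.last_mem (h : IsWalk D u v p) : v ∈ p :=
  List.mem_of_mem_getLast? h.2.2

theorem IsWalk.two_le_length (h : IsWalk D u v p) (huv : u ≠ v) : 2 ≤ p.length := by
  obtain ⟨t, rfl⟩ := h.exists_eq_cons
  cases t with
  | nil => exact absurd (by simpa using h.2.2) huv
  | cons b t => simp

theorem IsWalk.tail_of_cons_cons (h : IsWalk D a v (a :: b :: p)) : IsWalk D b v (b :: p) :=
  ⟨(List.isChain_cons_cons.mp h.1).2, rfl, by simpa using h.2.2⟩

theorem IsWalk.append_tail (h₁ : IsWalk D a b p) (h₂ : IsWalk D b c q) :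
    IsWalk D a c (p ++ q.tail) := by
  obtain ⟨t, rfl⟩ := h₂.exists_eq_cons
  obtain ⟨hc₁, hh₁, hl₁⟩ := h₁
  obtain ⟨hc₂, -, hl₂⟩ := h₂
  refine ⟨List.isChain_append.mpr ⟨hc₁, (List.isChain_cons.mp hc₂).2, ?_⟩, ?_, ?_⟩
  · intro y hy z hz
    obtain rfl : b = y := by simpa [hl₁] using hy
    exact (List.isChain_cons.mp hc₂).1 z hz
  · rw [List.head?_append, hh₁]; rfl
  · cases t with
    | nil =>
      obtain rfl : b = c := by simpa using hl₂
      simpa using hl₁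
    | cons d t => simpa [List.getLast?_append] using hl₂

theorem IsWalk.exists_split (h : IsWalk D a c p) (hu : u ∈ p) :
    ∃ q₁ q₂, p = q₁ ++ u :: q₂ ∧ IsWalk D a u (q₁ ++ [u]) ∧ IsWalk D u c (u :: q₂) := by
  obtain ⟨q₁, q₂, rfl⟩ := List.append_of_mem hu
  obtain ⟨hc, hh, hl⟩ := h
  obtain ⟨hc₁, hc₂, hlink⟩ := List.isChain_append.mp hc
  refine ⟨q₁, q₂, rfl, ⟨?_, ?_, by simp⟩, hc₂, rfl, by simpa [List.getLast?_append] using hl⟩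
  · refine List.isChain_append.mpr ⟨hc₁, List.isChain_singleton u, fun y hy z hz => ?_⟩
    obtain rfl : z = u := by simpa using hz.symm
    exact hlink y hy z (by simp)
  · cases q₁ <;> simpa using hh

theorem IsWalk.exists_arc_out {X : Set V} (h : IsWalk D a b p) (ha : a ∈ X) (hb : b ∉ X) :
    ∃ y z, D y z ∧ y ∈ X ∧ z ∉ X ∧ z ∈ p := by
  induction p generalizing a with
  | nil => simp [IsWalk] at h
  | cons d t ih =>
    obtain rfl : d = a := by simpa using h.2.1
    cases t with
    | nil =>
      obtain rfl : d = b := by simpa using h.2.2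
      exact absurd ha hb
    | cons c t =>
      by_cases hc : c ∈ X
      · obtain ⟨y, z, hyz, hy, hz, hzp⟩ := ih h.tail_of_cons_cons hc
        exact ⟨y, z, hyz, hy, hz, List.mem_cons_of_mem _ hzp⟩
      · exact ⟨d, c, (List.isChain_cons_cons.mp h.1).1, ha, hc, by simp⟩

theorem IsWalk.flip (h : IsWalk D u v p) : IsWalk (flip D) v u p.reverse :=
  ⟨List.isChain_reverse.mpr h.1, by rw [List.head?_reverse]; exact h.2.2,
    by rw [List.getLast?_reverse]; exact h.2.1⟩

theorem exists_shortest_walk (h : IsWalk D a b p) :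
    ∃ q, IsWalk D a b q ∧ ∀ r, IsWalk D a b r → q.length ≤ r.length := by
  obtain ⟨q, hq, hlen⟩ :=
    Nat.sInf_mem (s := {n | ∃ q, IsWalk D a b q ∧ q.length = n}) ⟨_, p, h, rfl⟩
  exact ⟨q, hq, fun r hr => hlen ▸ Nat.sInf_le ⟨r, hr, rfl⟩⟩

end Walks

/-- Counts vertices rather than arcs, and is `0` when `v` is not reachable from `u`. -/
noncomputable def walkDist (D : V → V → Prop) (u v : V) : ℕ :=
  sInf {n | ∃ p, IsWalk D u v p ∧ p.length = n}

section Intervals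

variable {D : V → V → Prop} {a b s s' u v x : V} {p r : List V}

theorem walkDist_eq_length (hp : IsWalk D u v p)
    (hmin : ∀ q, IsWalk D u v q → p.length ≤ q.length) : walkDist D u v = p.length :=
  le_antisymm (Nat.sInf_le ⟨p, hp, rfl⟩)
    (le_csInf ⟨_, p, hp, rfl⟩ fun _ ⟨q, hq, e⟩ => e ▸ hmin q hq)

theorem mem_interval_of_forall_walk_mem (hw : ∀ q, IsWalk D s' v q → s ∈ q)
    (hr : IsWalk D s' s r) (hne : s' ≠ s) (hx : x ∈ interval D s v) :
    x ∈ interval D s' v ∧ walkDist D s v < walkDist D s' v := by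
  obtain ⟨p, hp, hpmin, hxp⟩ := hx
  obtain ⟨r₀, hr₀, hr₀min⟩ := exists_shortest_walk hr
  obtain ⟨t, rfl⟩ := hp.exists_eq_cons
  have hlen : ∀ q, IsWalk D s' v q → (r₀ ++ t).length ≤ q.length := by
    intro q hq
    obtain ⟨q₁, q₂, rfl, hq₁, hq₂⟩ := hq.exists_split (hw q hq)
    have h₁ := hr₀min _ hq₁
    have h₂ := hpmin _ hq₂
    simp only [List.length_append, List.length_cons, List.length_nil] at h₁ h₂ ⊢
    omega
  have hwalk : IsWalk D s' v (r₀ ++ t) := hr₀.append_tail hp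
  have hlong := hr₀.two_le_length hne
  refine ⟨⟨r₀ ++ t, hwalk, hlen, ?_⟩, ?_⟩
  · rcases List.mem_cons.mp hxp with rfl | hxt
    · exact List.mem_append_left _ hr₀.last_mem
    · exact List.mem_append_right _ hxt
  · rw [walkDist_eq_length hp hpmin, walkDist_eq_length hwalk hlen]
    simp only [List.length_append, List.length_cons]
    omega

theorem interval_flip : interval (flip D) v u = interval D u v := by
  ext x
  constructor <;> rintro ⟨p, hp, hmin, hx⟩ <;>
    exact ⟨p.reverse, hp.flip, fun q hq => by simpa using hmin _ hq.flip, List.mem_reverse.mpr hx⟩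

theorem IsGeodetic.flip {S : Set V} (hS : IsGeodetic D S) : IsGeodetic (flip D) S := by
  intro x
  obtain ⟨u, hu, v, hv, hx⟩ := hS x
  exact ⟨v, hv, u, hu, interval_flip ▸ hx⟩

theorem NoTwoCycle.flip (h2c : NoTwoCycle D) : NoTwoCycle (flip D) :=
  fun u v h h' => h2c v u h h'

theorem NoTwoCycle.underlying_adj (h2c : NoTwoCycle D) (h : D a b) : (underlying D).Adj a b :=
  ⟨fun hab => h2c a b h (hab ▸ h), Or.inl h⟩

theorem underlying_flip : underlying (flip D) = underlying D := by
  ext a b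
  exact and_congr_right fun _ => or_comm

end Intervals

def IsOnlyExit (G : SimpleGraph V) (X : Set V) (s t : V) : Prop :=
  ∀ y ∈ X, ∀ z ∉ X, G.Adj y z → y = s ∧ z = t

section Cuts

variable {D : V → V → Prop} {X : Set V} {a b s t : V} {p : List V}

theorem IsWalk.end_mem_of_start_mem (hX : IsOnlyExit (underlying D) X s t) (hst : ¬ D s t)
    (h : IsWalk D a b p) (ha : a ∈ X) : b ∈ X := by
  by_contra hb
  obtain ⟨y, z, hyz, hy, hz, -⟩ := h.exists_arc_out ha hb
  obtain ⟨rfl, rfl⟩ := hX y hy z hz ⟨fun e => hz (e ▸ hy), Or.inl hyz⟩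
  exact hst hyz

theorem IsWalk.mem_of_start_not_mem (hX : IsOnlyExit (underlying D) X s t) (h : IsWalk D a b p)
    (ha : a ∉ X) (hb : b ∈ X) : s ∈ p := by
  obtain ⟨y, z, hyz, hy, hz, hzp⟩ := h.exists_arc_out (X := Xᶜ) ha (not_not.mpr hb)
  obtain ⟨rfl, -⟩ := hX z (not_not.mp hz) y hy ⟨fun e => hy (e ▸ not_not.mp hz), Or.inr hyz⟩
  exact hzp

end Cuts

section Bridges

variable {G : SimpleGraph V} {s t y : V}

theorem exists_isOnlyExit_of_isBridge (h : G.IsBridge s(s, t)) :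
    ∃ X : Set V, s ∈ X ∧ t ∉ X ∧ IsOnlyExit G X s t := by
  refine ⟨{y | (G.deleteEdges {s(s, t)}).Reachable s y}, .rfl, SimpleGraph.isBridge_iff.mp h, ?_⟩
  intro y hy z hz hyz
  by_cases he : s(y, z) = s(s, t)
  · rcases Sym2.eq_iff.mp he with ⟨rfl, rfl⟩ | ⟨rfl, -⟩
    · exact ⟨rfl, rfl⟩
    · exact absurd hy (SimpleGraph.isBridge_iff.mp h)
  · exact absurd (hy.trans (SimpleGraph.Adj.reachable
      (SimpleGraph.deleteEdges_adj.mpr ⟨hyz, by simpa using he⟩))) hz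

-- A cycle vertex keeps its two cycle neighbours, so its degree never drops to 1.
theorem mem_baseSet_of_mem_support {u : V} {c : G.Walk u u} (hc : c.IsCycle)
    (hy : y ∈ c.support) : y ∈ baseSet G := by
  suffices ∀ k, ∀ y ∈ c.support, y ∈ (pruneStep G)^[k] Set.univ from
    Set.mem_iInter.mpr fun k => this k y hy
  intro k
  induction k with
  | zero => exact fun _ _ => trivial
  | succ k ih =>
    intro y hy
    rw [Function.iterate_succ_apply']
    refine ⟨ih y hy, fun hdeg => ?_⟩
    obtain ⟨a, ha⟩ := Set.ncard_eq_one.mp hdeg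
    obtain ⟨z₁, z₂, hne, hz⟩ := Set.ncard_eq_two.mp (hc.ncard_neighborSet_toSubgraph_eq_two hy)
    have hnbr : ∀ z ∈ c.toSubgraph.neighborSet y, z = a := fun z hz => by
      have : z ∈ {u | u ∈ (pruneStep G)^[k] Set.univ ∧ G.Adj y u} :=
        ⟨ih z (SimpleGraph.Walk.mem_support_of_adj_toSubgraph (c.toSubgraph.adj_symm hz)),
          c.toSubgraph.adj_sub hz⟩
      rwa [ha] at this
    exact hne ((hnbr z₁ (hz ▸ by simp)).trans (hnbr z₂ (hz ▸ by simp)).symm)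

theorem isBridge_of_not_mem_baseSet (hs : s ∉ baseSet G) (hst : G.Adj s t) :
    G.IsBridge s(s, t) :=
  (SimpleGraph.isBridge_iff_forall_cycle_notMem hst).mpr fun _ c hc he =>
    hs (mem_baseSet_of_mem_support hc (c.fst_mem_support_of_mem_edges he))

end Bridges

section Geodetic

variable {D : V → V → Prop} {S B : Set V} {s t u v x : V}

/-- `v` lies on the side `X` of `s` of the bridge, whereas the vertex `u₀ ∈ S` starting a geodesic
through `t` lies outside `X`; so every walk from `u₀` to `v` enters `X` through `s`. -/
theorem exists_farther_start_of_isBridge (h2c : NoTwoCycle D) (hS : IsGeodetic D S)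
    (hbr : (underlying D).IsBridge s(s, t)) (hts : D t s) (hx : x ∈ interval D s v) :
    ∃ s' ∈ S, x ∈ interval D s' v ∧ walkDist D s v < walkDist D s' v := by
  obtain ⟨X, hsX, htX, hcut⟩ := exists_isOnlyExit_of_isBridge hbr
  have hst : ¬ D s t := h2c t s hts
  obtain ⟨p, hp, -⟩ := id hx
  have hvX : v ∈ X := hp.end_mem_of_start_mem hcut hst hsX
  obtain ⟨u₀, hu₀, v₀, -, p₀, hp₀, -, htp₀⟩ := hS t
  obtain ⟨q₁, -, -, hq₁, -⟩ := hp₀.exists_split htp₀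
  have hu₀X : u₀ ∉ X := fun h => htX (hq₁.end_mem_of_start_mem hcut hst h)
  exact ⟨u₀, hu₀, mem_interval_of_forall_walk_mem
    (fun q hq => hq.mem_of_start_not_mem hcut hu₀X hvX) (hq₁.append_tail (isWalk_pair hts))
    (fun h => hu₀X (h ▸ hsX)) hx⟩

theorem exists_start_mem_inter_or_isSource [Finite V] (h2c : NoTwoCycle D) (hS : IsGeodetic D S)
    (hB : ∀ s ∉ B, ∀ t, (underlying D).Adj s t → (underlying D).IsBridge s(s, t))
    (hu : u ∈ S) (hx : x ∈ interval D u v) :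
    ∃ s, (s ∈ S ∩ B ∨ IsSource D s) ∧ x ∈ interval D s v := by
  obtain ⟨s, ⟨hsS, hxs⟩, hmax⟩ := Set.exists_max_image {s | s ∈ S ∧ x ∈ interval D s v}
    (walkDist D · v) (Set.toFinite _) ⟨u, hu, hx⟩
  refine ⟨s, by_contra fun hs => ?_, hxs⟩
  obtain ⟨t, hts⟩ : ∃ t, D t s := by simpa [IsSource] using fun h => hs (Or.inr h)
  have hsB : s ∉ B := fun h => hs (Or.inl ⟨hsS, h⟩)
  obtain ⟨s', hs'S, hxs', hlt⟩ :=
    exists_farther_start_of_isBridge h2c hS (hB s hsB t (h2c.underlying_adj hts).symm) hts hxs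
  exact (hmax s' ⟨hs'S, hxs'⟩).not_gt hlt

end Geodetic

/-- Let `D` be a digraph without 2-cycles, `S⁰` its set of
extremal vertices and `D_b` its base digraph. If `S` is a geodetic set of `D`,
then `(S ∩ V(D_b)) ∪ S⁰` is also a geodetic set of `D`. -/
theorem geodetic_restrict_to_base_union_extremal [Fintype V]
    (D : V → V → Prop) (h2c : NoTwoCycle D)
    (S : Set V) (hS : IsGeodetic D S) :
    IsGeodetic D ((S ∩ baseSet (underlying D)) ∪ {v | Extremal D v}) := by
  have hB : ∀ s ∉ baseSet (underlying D), ∀ t, (underlying D).Adj s t →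
      (underlying D).IsBridge s(s, t) := fun _ hs _ => isBridge_of_not_mem_baseSet hs
  intro x
  obtain ⟨u, hu, v, hv, hx⟩ := hS x
  obtain ⟨s, hs, hxs⟩ := exists_start_mem_inter_or_isSource h2c hS hB hu hx
  obtain ⟨t, ht, hxt⟩ := exists_start_mem_inter_or_isSource (B := baseSet (underlying D))
    h2c.flip hS.flip (underlying_flip ▸ hB) hv (interval_flip ▸ hxs)
  exact ⟨s, hs.imp id Or.inl, t, ht.imp id Or.inr, interval_flip ▸ hxt⟩

end GeoPaper
end
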